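/- arXiv:2312.05004 — 2 statements merged into one kernel-verified Lean document; each statement's English description precedes it below -/
import Mathlib

section
/- For every n ≥ 1, the set Ĉ₀(ℝ^n) of continuous functions f : ℝ^n → ℝ with lim_{‖x‖→∞} f(x) = 0 that attain their maximum at exactly one point is n-lineable: there exists an n-dimensional vector subspace V of C(ℝ^n, ℝ) such that every nonzero f ∈ V tends to 0 at infinity and attains its maximum at a unique point. -/
/-!
For `a` in a real inner product space `E`, the function `f_a x = ⟪a, x⟫ exp (-‖x‖² / 2)` is
continuous, linear in `a`, and bounded by `2‖a‖ / ‖x‖`, so it vanishes at infinity. By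
Cauchy–Schwarz it is at most `‖a‖ · ‖x‖ exp (-‖x‖² / 2) ≤ ‖a‖ exp (-1/2)`, since
`s exp (-s² / 2)` has its unique maximum at `s = 1`; equality forces `‖x‖ = 1` and equality in
Cauchy–Schwarz, so the maximum is attained only at `a / ‖a‖`. Since `a ↦ f_a` is injective, its
image is the required `dim E`-dimensional subspace.
-/

open Real
open scoped RealInnerProductSpace

lemma mul_exp_neg_sq_div_two_lt {s : ℝ} (hs : s ≠ 1) : s * exp (-s ^ 2 / 2) < exp (-1 / 2) := by
  have hs' : s < exp ((s ^ 2 - 1) / 2) :=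
    calc s < (s ^ 2 - 1) / 2 + 1 := by nlinarith [sq_pos_of_ne_zero (sub_ne_zero.2 hs)]
      _ ≤ exp ((s ^ 2 - 1) / 2) := add_one_le_exp _
  calc s * exp (-s ^ 2 / 2) < exp ((s ^ 2 - 1) / 2) * exp (-s ^ 2 / 2) :=
        mul_lt_mul_of_pos_right hs' (exp_pos _)
    _ = exp (-1 / 2) := by rw [← exp_add]; ring_nf

lemma mul_exp_neg_sq_div_two_le (s : ℝ) : s * exp (-s ^ 2 / 2) ≤ exp (-1 / 2) := by
  rcases eq_or_ne s 1 with rfl | hs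
  · norm_num
  · exact (mul_exp_neg_sq_div_two_lt hs).le

lemma mul_exp_neg_sq_div_two_le_two_div {s : ℝ} (hs : 0 < s) : s * exp (-s ^ 2 / 2) ≤ 2 / s := by
  rw [neg_div, exp_neg, ← div_eq_mul_inv, div_le_div_iff₀ (exp_pos _) hs]
  nlinarith [add_one_le_exp (s ^ 2 / 2)]

variable {E : Type*} [NormedAddCommGroup E] [InnerProductSpace ℝ E]

noncomputable def innerGaussian : E →ₗ[ℝ] C(E, ℝ) where
  toFun a := ⟨fun x => ⟪a, x⟫ * exp (-‖x‖ ^ 2 / 2), by fun_prop⟩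
  map_add' a b := by ext x; simp [inner_add_left, add_mul]
  map_smul' c a := by ext x; simp [real_inner_smul_left, mul_assoc]

lemma innerGaussian_apply (a x : E) : innerGaussian a x = ⟪a, x⟫ * exp (-‖x‖ ^ 2 / 2) := rfl

lemma innerGaussian_injective : Function.Injective (innerGaussian : E →ₗ[ℝ] C(E, ℝ)) := by
  refine (injective_iff_map_eq_zero _).2 fun a ha => ?_
  have h := DFunLike.congr_fun ha a
  rw [innerGaussian_apply, ContinuousMap.zero_apply, mul_eq_zero] at h
  exact inner_self_eq_zero.1 (h.resolve_right (exp_pos _).ne')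

lemma abs_innerGaussian_le (a : E) {x : E} (hx : x ≠ 0) :
    |innerGaussian a x| ≤ 2 * ‖a‖ / ‖x‖ :=
  calc |innerGaussian a x| = |⟪a, x⟫| * exp (-‖x‖ ^ 2 / 2) := by
        rw [innerGaussian_apply, abs_mul, abs_of_pos (exp_pos _)]
    _ ≤ ‖a‖ * ‖x‖ * exp (-‖x‖ ^ 2 / 2) :=
        mul_le_mul_of_nonneg_right (abs_real_inner_le_norm a x) (exp_pos _).le
    _ ≤ ‖a‖ * (2 / ‖x‖) := by
        rw [mul_assoc]
        exact mul_le_mul_of_nonneg_left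
          (mul_exp_neg_sq_div_two_le_two_div (norm_pos_iff.2 hx)) (norm_nonneg a)
    _ = 2 * ‖a‖ / ‖x‖ := by ring

lemma exists_abs_innerGaussian_lt (a : E) {ε : ℝ} (hε : 0 < ε) :
    ∃ R > 0, ∀ x, R < ‖x‖ → |innerGaussian a x| < ε := by
  refine ⟨2 * ‖a‖ / ε + 1, by positivity, fun x hx => ?_⟩
  have hx₀ : 0 < ‖x‖ := lt_trans (by positivity) hx
  calc |innerGaussian a x| ≤ 2 * ‖a‖ / ‖x‖ := abs_innerGaussian_le a (norm_pos_iff.1 hx₀)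
    _ < ε := by
        rw [div_lt_iff₀ hx₀, ← div_lt_iff₀' hε]
        linarith

lemma innerGaussian_le_norm_mul (a x : E) :
    innerGaussian a x ≤ ‖a‖ * (‖x‖ * exp (-‖x‖ ^ 2 / 2)) := by
  rw [← mul_assoc]
  exact mul_le_mul_of_nonneg_right (real_inner_le_norm a x) (exp_pos _).le

lemma innerGaussian_le (a x : E) : innerGaussian a x ≤ ‖a‖ * exp (-1 / 2) :=
  (innerGaussian_le_norm_mul a x).trans <|
    mul_le_mul_of_nonneg_left (mul_exp_neg_sq_div_two_le _) (norm_nonneg a)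

lemma norm_inv_norm_smul {a : E} (ha : a ≠ 0) : ‖‖a‖⁻¹ • a‖ = 1 := by
  rw [norm_smul, norm_inv, norm_norm, inv_mul_cancel₀ (norm_ne_zero_iff.2 ha)]

lemma innerGaussian_apply_inv_norm_smul {a : E} (ha : a ≠ 0) :
    innerGaussian a (‖a‖⁻¹ • a) = ‖a‖ * exp (-1 / 2) := by
  have ha' : ‖a‖ ≠ 0 := norm_ne_zero_iff.2 ha
  rw [innerGaussian_apply, norm_inv_norm_smul ha, real_inner_smul_right,
    real_inner_self_eq_norm_sq]
  field_simp

lemma eq_inv_norm_smul_of_le_innerGaussian {a x : E} (ha : a ≠ 0)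
    (hx : ‖a‖ * exp (-1 / 2) ≤ innerGaussian a x) : x = ‖a‖⁻¹ • a := by
  have ha₀ : 0 < ‖a‖ := norm_pos_iff.2 ha
  have hx₁ : ‖x‖ = 1 := by
    by_contra hne
    refine (hx.trans (innerGaussian_le_norm_mul a x)).not_gt ?_
    exact mul_lt_mul_of_pos_left (mul_exp_neg_sq_div_two_lt hne) ha₀
  have hinner : ⟪a, x⟫ = ‖a‖ := by
    rw [innerGaussian_apply, hx₁, one_pow] at hx
    refine le_antisymm ?_ (le_of_mul_le_mul_right hx (exp_pos _))
    simpa [hx₁] using real_inner_le_norm a x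
  refine ((inner_eq_one_iff_of_norm_eq_one (𝕜 := ℝ) (norm_inv_norm_smul ha) hx₁).1 ?_).symm
  rw [real_inner_smul_left, hinner, inv_mul_cancel₀ ha₀.ne']

lemma existsUnique_innerGaussian_max {a : E} (ha : a ≠ 0) :
    ∃! p, ∀ x, innerGaussian a x ≤ innerGaussian a p := by
  refine ⟨‖a‖⁻¹ • a, fun x => ?_, fun q hq => ?_⟩
  · rw [innerGaussian_apply_inv_norm_smul ha]
    exact innerGaussian_le a x
  · exact eq_inv_norm_smul_of_le_innerGaussian ha
      (innerGaussian_apply_inv_norm_smul ha ▸ hq _)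

theorem stmt_7_general (n : ℕ) :
    ∃ V : Submodule ℝ C(EuclideanSpace ℝ (Fin n), ℝ), Module.finrank ℝ V = n ∧
      ∀ f : C(EuclideanSpace ℝ (Fin n), ℝ), f ∈ V → f ≠ 0 →
        (∀ ε > (0 : ℝ), ∃ R > (0 : ℝ), ∀ x, R < ‖x‖ → |f x| < ε) ∧
        (∃! p : EuclideanSpace ℝ (Fin n), ∀ x, f x ≤ f p) := by
  refine ⟨LinearMap.range innerGaussian, ?_, ?_⟩
  · rw [LinearMap.finrank_range_of_inj innerGaussian_injective, finrank_euclideanSpace_fin]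
  · rintro _ ⟨a, rfl⟩ hf
    have ha : a ≠ 0 := by
      rintro rfl
      exact hf (map_zero _)
    exact ⟨fun ε hε => exists_abs_innerGaussian_lt a hε, existsUnique_innerGaussian_max ha⟩

/-- For every `n ≥ 1`, the set of continuous functions `ℝⁿ → ℝ` vanishing at infinity that
attain their maximum at exactly one point is `n`-lineable: there is an `n`-dimensional
subspace `V` of `C(ℝⁿ, ℝ)` such that every nonzero `f ∈ V` tends to `0` at infinity and
attains its maximum at a unique point. -/
theorem stmt_7 (n : ℕ) (hn : 1 ≤ n) :
    ∃ V : Submodule ℝ C(EuclideanSpace ℝ (Fin n), ℝ), Module.finrank ℝ V = n ∧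
      ∀ f : C(EuclideanSpace ℝ (Fin n), ℝ), f ∈ V → f ≠ 0 →
        (∀ ε > (0 : ℝ), ∃ R > (0 : ℝ), ∀ x, R < ‖x‖ → |f x| < ε) ∧
        (∃! p : EuclideanSpace ℝ (Fin n), ∀ x, f x ≤ f p) :=
  stmt_7_general n
end

section
/- Let n ≥ 2. Assume (i) for every compact K ⊂ ℝ^n, any subspace of C(K) whose nonzero elements all attain their maximum at exactly one point has dimension at most n, and (ii) every (n+2)-dimensional space of real-valued functions contains an (n+1)-dimensional alternating subspace. Then there is no (n+2)-dimensional subspace W of C₀(ℝ^n) with every nonzero element of W attaining its maximum at exactly one point; i.e., Ĉ₀(ℝ^n) is not (n+2)-lineable. -/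
open scoped ZeroAtInfty
open Filter Metric

/-!
Pass to an `(n+1)`-dimensional alternating subspace `W'` of `W`. Each nonzero `g ∈ W'` takes a
positive value, so every function uniformly close to `g` can only attain its maximum where `g`
is large, i.e. inside one compact set. Covering the compact unit sphere of `W'` and rescaling,
the maximum points of all nonzero elements of `W'` lie in a single compact `K`. Restricting to
`K` is injective on `W'` and keeps maxima unique, which yields an `(n+1)`-dimensional subspace
of `C(K)` against hypothesis (i).
-/

namespace ZeroAtInftyContinuousMap

variable {X : Type*} [TopologicalSpace X]

theorem abs_apply_sub_le_norm_sub (g h : C₀(X, ℝ)) (x : X) : |h x - g x| ≤ ‖h - g‖ := by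
  simpa [norm_toBCF_eq_norm, Real.norm_eq_abs] using
    (h - g).toBCF.norm_coe_le_norm x

theorem exists_isCompact_forall_norm_sub_lt_maxPoint_mem (g : C₀(X, ℝ)) {p : X} (hp : 0 < g p) :
    ∃ K, IsCompact K ∧ ∀ h : C₀(X, ℝ), ‖h - g‖ < g p / 3 →
      ∀ q, (∀ x, h x ≤ h q) → q ∈ K := by
  have hsmall : ∀ᶠ x in cocompact X, |g x| < g p / 3 := by
    simpa [Real.dist_eq] using
      Metric.tendsto_nhds.mp (zero_at_infty g) (g p / 3) (by positivity)
  obtain ⟨K, hK, hKc⟩ := hasBasis_cocompact.eventually_iff.mp hsmall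
  -- off `K`: `h q < g q + g p / 3 < 2 * g p / 3 < h p`
  refine ⟨K, hK, fun h hh q hq => by_contra fun hqK => ?_⟩
  have hgq := (abs_lt.mp (hKc hqK)).2
  have hhq := (abs_lt.mp ((abs_apply_sub_le_norm_sub g h q).trans_lt hh)).2
  have hhp := (abs_lt.mp ((abs_apply_sub_le_norm_sub g h p).trans_lt hh)).1
  linarith [hq p]

def restrictₗ (K : Set X) : C₀(X, ℝ) →ₗ[ℝ] C(K, ℝ) where
  toFun g := (g : C(X, ℝ)).restrict K
  map_add' _ _ := rfl
  map_smul' _ _ := rfl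

end ZeroAtInftyContinuousMap

open ZeroAtInftyContinuousMap

section

variable {X : Type*} [TopologicalSpace X]

theorem IsCompact.exists_isCompact_maxPoint_mem {S : Set C₀(X, ℝ)} (hS : IsCompact S)
    (hpos : ∀ g ∈ S, ∃ p, 0 < g p) :
    ∃ K, IsCompact K ∧ ∀ g ∈ S, ∀ q, (∀ x, g x ≤ g q) → q ∈ K := by
  refine hS.induction_on
    (p := fun T => ∃ K, IsCompact K ∧ ∀ g ∈ T, ∀ q, (∀ x, g x ≤ g q) → q ∈ K)
    ⟨∅, isCompact_empty, by simp⟩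
    (fun T T' hTT' ⟨K, hK, hT'⟩ => ⟨K, hK, fun g hg => hT' g (hTT' hg)⟩)
    (fun T T' ⟨K, hK, hT⟩ ⟨K', hK', hT'⟩ => ⟨K ∪ K', hK.union hK', ?_⟩) fun g hg => ?_
  · rintro g (hg | hg) q hq
    exacts [Or.inl (hT g hg q hq), Or.inr (hT' g hg q hq)]
  obtain ⟨p, hp⟩ := hpos g hg
  obtain ⟨K, hK, hKmax⟩ := g.exists_isCompact_forall_norm_sub_lt_maxPoint_mem hp
  refine ⟨ball g (g p / 3), mem_nhdsWithin_of_mem_nhds (ball_mem_nhds g (by positivity)), K, hK,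
    fun h hh => hKmax h (by rwa [mem_ball, dist_eq_norm] at hh)⟩

theorem Submodule.exists_isCompact_maxPoint_mem (V : Submodule ℝ C₀(X, ℝ))
    [FiniteDimensional ℝ V] (hpos : ∀ g ∈ V, g ≠ 0 → ∃ p, 0 < g p) :
    ∃ K, IsCompact K ∧ ∀ g ∈ V, g ≠ 0 → ∀ q, (∀ x, g x ≤ g q) → q ∈ K := by
  obtain ⟨K, hK, hKmax⟩ :=
    ((isCompact_sphere (0 : V) 1).image continuous_subtype_val).exists_isCompact_maxPoint_mem
      (by
        rintro _ ⟨s, hs, rfl⟩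
        refine hpos s s.2 fun h0 => ?_
        simp [(Submodule.coe_eq_zero).mp h0] at hs)
  refine ⟨K, hK, fun g hg hg0 q hq => ?_⟩
  set gV : V := ⟨g, hg⟩
  have hs : ‖gV‖⁻¹ • gV ∈ sphere (0 : V) 1 := by
    rw [mem_sphere, Subtype.dist_eq]
    simp [gV, norm_smul, hg0]
  refine hKmax _ ⟨_, hs, rfl⟩ q fun x => ?_
  simpa [gV] using mul_le_mul_of_nonneg_left (hq x) (inv_nonneg.mpr (norm_nonneg g))

theorem Submodule.exists_rank_eq_forall_existsUnique_maxPoint_restrict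
    (V : Submodule ℝ C₀(X, ℝ)) (K : Set X)
    (hmax : ∀ g ∈ V, g ≠ 0 → ∃! p, ∀ x, g x ≤ g p) (hpos : ∀ g ∈ V, g ≠ 0 → ∃ p, 0 < g p)
    (hK : ∀ g ∈ V, g ≠ 0 → ∀ q, (∀ x, g x ≤ g q) → q ∈ K) :
    ∃ U : Submodule ℝ C(K, ℝ), Module.rank ℝ U = Module.rank ℝ V ∧
      ∀ f ∈ U, f ≠ 0 → ∃! p : K, ∀ x, f x ≤ f p := by
  have hinj : Function.Injective (restrictₗ K ∘ₗ V.subtype) := by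
    refine (injective_iff_map_eq_zero _).mpr fun g hg => by_contra fun hg0 => ?_
    have hg0' : (g : C₀(X, ℝ)) ≠ 0 := by simpa using hg0
    obtain ⟨p, hp, -⟩ := hmax g g.2 hg0'
    obtain ⟨y, hy⟩ := hpos g g.2 hg0'
    have : (g : C₀(X, ℝ)) p = 0 := DFunLike.congr_fun hg ⟨p, hK g g.2 hg0' p hp⟩
    linarith [hp y]
  refine ⟨LinearMap.range (restrictₗ K ∘ₗ V.subtype), rank_range_of_injective _ hinj, ?_⟩
  rintro _ ⟨g, rfl⟩ hg0
  have hg0' : (g : C₀(X, ℝ)) ≠ 0 := fun h => hg0 (by simp [h])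
  obtain ⟨p, hp, hpu⟩ := hmax g g.2 hg0'
  have hpK := hK g g.2 hg0' p hp
  exact ⟨⟨p, hpK⟩, fun x => hp x,
    fun q hq => Subtype.ext (hpu q fun x => (hp x).trans (hq ⟨p, hpK⟩))⟩

end

theorem stmt_15_general (n : ℕ)
    (hK : ∀ K : Set (EuclideanSpace ℝ (Fin n)), IsCompact K →
      ∀ V : Submodule ℝ C(K, ℝ),
        (∀ f : C(K, ℝ), f ∈ V → f ≠ 0 → ∃! p : K, ∀ x : K, f x ≤ f p) →
        Module.rank ℝ V ≤ n)
    (halt : ∀ V : Submodule ℝ C₀(EuclideanSpace ℝ (Fin n), ℝ),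
      Module.finrank ℝ V = n + 2 →
      ∃ W : Submodule ℝ C₀(EuclideanSpace ℝ (Fin n), ℝ), W ≤ V ∧
        Module.finrank ℝ W = n + 1 ∧
        ∀ g : C₀(EuclideanSpace ℝ (Fin n), ℝ), g ∈ W → g ≠ 0 →
          ∃ x y : EuclideanSpace ℝ (Fin n), g x < 0 ∧ 0 < g y) :
    ¬ ∃ W : Submodule ℝ C₀(EuclideanSpace ℝ (Fin n), ℝ),
        Module.finrank ℝ W = n + 2 ∧
        ∀ g : C₀(EuclideanSpace ℝ (Fin n), ℝ), g ∈ W → g ≠ 0 →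
          ∃! p : EuclideanSpace ℝ (Fin n), ∀ x, g x ≤ g p := by
  rintro ⟨W, hWdim, hWmax⟩
  obtain ⟨W', hW'W, hW'dim, hW'alt⟩ := halt W hWdim
  have : FiniteDimensional ℝ W' := .of_finrank_eq_succ hW'dim
  have hpos : ∀ g ∈ W', g ≠ 0 → ∃ p, 0 < g p := fun g hg hg0 =>
    let ⟨_, y, _, hy⟩ := hW'alt g hg hg0
    ⟨y, hy⟩
  obtain ⟨K, hKc, hKmax⟩ := W'.exists_isCompact_maxPoint_mem hpos
  obtain ⟨U, hUrank, hUmax⟩ := W'.exists_rank_eq_forall_existsUnique_maxPoint_restrict K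
    (fun g hg => hWmax g (hW'W hg)) hpos hKmax
  have hrank := hK K hKc U hUmax
  rw [hUrank, ← Module.finrank_eq_rank, hW'dim] at hrank
  exact n.not_succ_le_self (Nat.cast_le.mp hrank)

/-- Let `n ≥ 2`. Assume (i) for every compact `K ⊆ ℝⁿ`, any subspace of `C(K)` whose nonzero
elements all attain their maximum at exactly one point has dimension at most `n`, and (ii)
every `(n+2)`-dimensional subspace of `C₀(ℝⁿ)` contains an `(n+1)`-dimensional subspace all
of whose nonzero elements are alternating. Then there is no `(n+2)`-dimensional subspace `W`
of `C₀(ℝⁿ)` with every nonzero element of `W` attaining its maximum at exactly one point,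
i.e. `Ĉ₀(ℝⁿ)` is not `(n+2)`-lineable. -/
theorem stmt_15 (n : ℕ) (hn : 2 ≤ n)
    (hK : ∀ K : Set (EuclideanSpace ℝ (Fin n)), IsCompact K →
      ∀ V : Submodule ℝ C(K, ℝ),
        (∀ f : C(K, ℝ), f ∈ V → f ≠ 0 → ∃! p : K, ∀ x : K, f x ≤ f p) →
        Module.rank ℝ V ≤ n)
    (halt : ∀ V : Submodule ℝ C₀(EuclideanSpace ℝ (Fin n), ℝ),
      Module.finrank ℝ V = n + 2 →
      ∃ W : Submodule ℝ C₀(EuclideanSpace ℝ (Fin n), ℝ), W ≤ V ∧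
        Module.finrank ℝ W = n + 1 ∧
        ∀ g : C₀(EuclideanSpace ℝ (Fin n), ℝ), g ∈ W → g ≠ 0 →
          ∃ x y : EuclideanSpace ℝ (Fin n), g x < 0 ∧ 0 < g y) :
    ¬ ∃ W : Submodule ℝ C₀(EuclideanSpace ℝ (Fin n), ℝ),
        Module.finrank ℝ W = n + 2 ∧
        ∀ g : C₀(EuclideanSpace ℝ (Fin n), ℝ), g ∈ W → g ≠ 0 →
          ∃! p : EuclideanSpace ℝ (Fin n), ∀ x, g x ≤ g p :=
  stmt_15_general n hK halt
end
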